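/- arXiv:1901.01876 — 3 statements merged into one kernel-verified Lean document; each statement's English description precedes it below -/
import Mathlib

section
/- For every p ∈ [0,1] and every k ∈ ℕ with k ≥ 1, μ_k(p) ≤ (1 − (1−p)^k)^{k−1}. -/
open scoped BigOperators

namespace ERGraph

noncomputable def edgeCount {V : Type*} (G : SimpleGraph V) : ℕ := Nat.card G.edgeSet

noncomputable def graphWeight (N : ℕ) (p : ℝ) (G : SimpleGraph (Fin N)) : ℝ :=
  p ^ edgeCount G * (1 - p) ^ (N.choose 2 - edgeCount G)

/-- Probability of the event `A` under the Erdős–Rényi measure `P_{N,p}`. -/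
noncomputable def erProb (N : ℕ) (p : ℝ) (A : Set (SimpleGraph (Fin N))) : ℝ :=
  ∑ᶠ G ∈ A, graphWeight N p G

/-- `μ_k(p)`: probability that `G(k,p)` is connected. -/
noncomputable def mu (k : ℕ) (p : ℝ) : ℝ := erProb k p {G | G.Connected}

/-- Number of connected components of `G` with exactly `k` vertices. -/
noncomputable def compCount {N : ℕ} (G : SimpleGraph (Fin N)) (k : ℕ) : ℕ :=
  Nat.card {C : G.ConnectedComponent // Nat.card C.supp = k}

/-- The event `A_N(ℓ)`. -/
def eventA (N : ℕ) (ℓ : ℕ → ℕ) : Set (SimpleGraph (Fin N)) :=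
  {G | ∀ k, 1 ≤ k → compCount G k = ℓ k}


open Finset

open Classical in
noncomputable def Pr {ι : Type*} [DecidableEq ι] (p : ℝ) (B : Finset ι) (Φ : Finset ι → Prop) : ℝ :=
  ∑ s ∈ B.powerset, if Φ s then p ^ s.card * (1 - p) ^ (B \ s).card else 0

section Engine
variable {ι : Type*} [DecidableEq ι] {p : ℝ}

lemma weight_nonneg (hp0 : 0 ≤ p) (hp1 : p ≤ 1) (B s : Finset ι) :
    0 ≤ p ^ s.card * (1 - p) ^ (B \ s).card :=
  mul_nonneg (pow_nonneg hp0 _) (pow_nonneg (by linarith) _)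

lemma Pr_nonneg (hp0 : 0 ≤ p) (hp1 : p ≤ 1) (B : Finset ι) (Φ : Finset ι → Prop) :
    0 ≤ Pr p B Φ := by
  classical
  refine Finset.sum_nonneg fun s _ => ?_
  split
  · exact weight_nonneg hp0 hp1 B s
  · exact le_refl 0

lemma sum_weight (hp : p + (1 - p) = 1) (B : Finset ι) :
    ∑ s ∈ B.powerset, p ^ s.card * (1 - p) ^ (B \ s).card = 1 := by
  have h := Finset.prod_add (fun _ : ι => p) (fun _ : ι => 1 - p) B
  simp only [Finset.prod_const] at h
  rw [← h]
  simp

lemma Pr_congr {B : Finset ι} {Φ Ψ : Finset ι → Prop}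
    (h : ∀ s ∈ B.powerset, (Φ s ↔ Ψ s)) : Pr p B Φ = Pr p B Ψ := by
  classical
  refine Finset.sum_congr rfl fun s hs => ?_
  have := h s hs
  by_cases hΦ : Φ s
  · rw [if_pos hΦ, if_pos (this.mp hΦ)]
  · rw [if_neg hΦ, if_neg (fun hΨ => hΦ (this.mpr hΨ))]

lemma Pr_mono (hp0 : 0 ≤ p) (hp1 : p ≤ 1) {B : Finset ι} {Φ Ψ : Finset ι → Prop}
    (h : ∀ s ∈ B.powerset, Φ s → Ψ s) : Pr p B Φ ≤ Pr p B Ψ := by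
  classical
  refine Finset.sum_le_sum fun s hs => ?_
  by_cases hΦ : Φ s
  · rw [if_pos hΦ, if_pos (h s hs hΦ)]
  · rw [if_neg hΦ]
    split
    · exact weight_nonneg hp0 hp1 B s
    · exact le_refl 0

lemma Pr_true (hp : p + (1 - p) = 1) (B : Finset ι) :
    Pr p B (fun _ => True) = 1 := by
  classical
  rw [Pr]
  simp only [if_pos trivial]
  exact sum_weight hp B

lemma Pr_le_one (hp0 : 0 ≤ p) (hp1 : p ≤ 1) (B : Finset ι) (Φ : Finset ι → Prop) :
    Pr p B Φ ≤ 1 := by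
  have := Pr_mono hp0 hp1 (B := B) (Φ := Φ) (Ψ := fun _ => True) (fun s _ _ => trivial)
  rw [Pr_true (by ring) B] at this
  exact this

lemma Pr_of_forall_not {B : Finset ι} {Φ : Finset ι → Prop}
    (h : ∀ s ∈ B.powerset, ¬ Φ s) : Pr p B Φ = 0 := by
  classical
  refine Finset.sum_eq_zero fun s hs => ?_
  rw [if_neg (h s hs)]

lemma Pr_partition {β : Type*} [DecidableEq β] {B : Finset ι} (Φ : Finset ι → Prop)
    (stat : Finset ι → β) (D : Finset β) (hD : ∀ s ∈ B.powerset, stat s ∈ D) :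
    Pr p B Φ = ∑ N ∈ D, Pr p B (fun s => Φ s ∧ stat s = N) := by
  classical
  unfold Pr
  rw [Finset.sum_comm]
  refine Finset.sum_congr rfl fun s hs => ?_
  refine Eq.symm ((Finset.sum_eq_single_of_mem (stat s) (hD s hs)
      (fun b _ hb => if_neg (fun hc => hb (hc.2.symm)))).trans ?_)
  by_cases hΦ : Φ s
  · rw [if_pos ⟨hΦ, rfl⟩, if_pos hΦ]
  · rw [if_neg (fun hc => hΦ hc.1), if_neg hΦ]

lemma ite_zero_mul_ite_zero {P Q : Prop} [Decidable P] [Decidable Q] (x y : ℝ) :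
    (if P then x else 0) * (if Q then y else 0) = if P ∧ Q then x * y else 0 := by
  by_cases hP : P <;> by_cases hQ : Q <;> simp [hP, hQ]

lemma Pr_factor {B₁ B₂ : Finset ι} (hd : Disjoint B₁ B₂) {Φ Φ₁ Φ₂ : Finset ι → Prop}
    (hΦ : ∀ s₁ ∈ B₁.powerset, ∀ s₂ ∈ B₂.powerset, (Φ (s₁ ∪ s₂) ↔ Φ₁ s₁ ∧ Φ₂ s₂)) :
    Pr p (B₁ ∪ B₂) Φ = Pr p B₁ Φ₁ * Pr p B₂ Φ₂ := by
  classical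
  unfold Pr
  rw [Finset.sum_mul_sum, ← Finset.sum_product']
  refine Finset.sum_nbij' (fun s => (s ∩ B₁, s ∩ B₂)) (fun q => q.1 ∪ q.2) ?_ ?_ ?_ ?_ ?_
  · intro s hs
    simp only [Finset.mem_product, Finset.mem_powerset]
    exact ⟨Finset.inter_subset_right, Finset.inter_subset_right⟩
  · intro q hq
    simp only [Finset.mem_product, Finset.mem_powerset] at hq ⊢
    exact Finset.union_subset_union hq.1 hq.2
  · intro s hs
    simp only [Finset.mem_powerset] at hs
    dsimp only
    rw [← Finset.inter_union_distrib_left, Finset.inter_eq_left.mpr hs]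
  · rintro ⟨s₁, s₂⟩ hq
    simp only [Finset.mem_product, Finset.mem_powerset] at hq
    dsimp only
    have e1 : (s₁ ∪ s₂) ∩ B₁ = s₁ := by
      rw [Finset.union_inter_distrib_right, Finset.inter_eq_left.mpr hq.1,
        Finset.disjoint_iff_inter_eq_empty.mp (hd.symm.mono_left hq.2), Finset.union_empty]
    have e2 : (s₁ ∪ s₂) ∩ B₂ = s₂ := by
      rw [Finset.union_inter_distrib_right, Finset.inter_eq_left.mpr hq.2,
        Finset.disjoint_iff_inter_eq_empty.mp (hd.mono_left hq.1), Finset.empty_union]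
    rw [e1, e2]
  · intro s hs
    simp only [Finset.mem_powerset] at hs
    have hs₁ : s ∩ B₁ ⊆ B₁ := Finset.inter_subset_right
    have hs₂ : s ∩ B₂ ⊆ B₂ := Finset.inter_subset_right
    have hu : (s ∩ B₁) ∪ (s ∩ B₂) = s := by
      rw [← Finset.inter_union_distrib_left, Finset.inter_eq_left.mpr hs]
    have hΦs := hΦ (s ∩ B₁) (Finset.mem_powerset.mpr hs₁) (s ∩ B₂) (Finset.mem_powerset.mpr hs₂)
    rw [hu] at hΦs
    have hd12 : Disjoint (s ∩ B₁) (s ∩ B₂) := hd.mono hs₁ hs₂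
    have hcard : s.card = (s ∩ B₁).card + (s ∩ B₂).card := by
      rw [← Finset.card_union_of_disjoint hd12, hu]
    have hB1 : B₁ \ (s ∩ B₁) = B₁ \ s := by ext x; simp
    have hB2 : B₂ \ (s ∩ B₂) = B₂ \ s := by ext x; simp
    have hdd : Disjoint (B₁ \ s) (B₂ \ s) := hd.mono Finset.sdiff_subset Finset.sdiff_subset
    have hcard2 : ((B₁ ∪ B₂) \ s).card = (B₁ \ (s ∩ B₁)).card + (B₂ \ (s ∩ B₂)).card := by
      rw [Finset.union_sdiff_distrib, Finset.card_union_of_disjoint hdd, hB1, hB2]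
    dsimp only
    rw [ite_zero_mul_ite_zero]
    by_cases hF : Φ s
    · rw [if_pos hF, if_pos (hΦs.mp hF), hcard, hcard2, pow_add, pow_add]
      ring
    · rw [if_neg hF, if_neg (fun hc => hF (hΦs.mpr hc))]

open Classical in
lemma Pr_empty_pool {Φ : Finset ι → Prop} :
    Pr p (∅ : Finset ι) Φ = if Φ ∅ then 1 else 0 := by
  classical
  unfold Pr
  rw [Finset.powerset_empty, Finset.sum_singleton]
  by_cases h : Φ ∅ <;> simp [h]

lemma Pr_prod {κ : Type*} [DecidableEq κ] (C : Finset κ) (Bf : κ → Finset ι)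
    (hdisj : ∀ x ∈ C, ∀ y ∈ C, x ≠ y → Disjoint (Bf x) (Bf y))
    (Φ : Finset ι → Prop) (Φv : κ → Finset ι → Prop)
    (hΦ : ∀ s ∈ (C.biUnion Bf).powerset, (Φ s ↔ ∀ v ∈ C, Φv v (s ∩ Bf v))) :
    Pr p (C.biUnion Bf) Φ = ∏ v ∈ C, Pr p (Bf v) (Φv v) := by
  classical
  induction C using Finset.induction_on generalizing Φ with
  | empty =>
    rw [Finset.biUnion_empty] at hΦ ⊢
    rw [Pr_empty_pool, Finset.prod_empty]
    rw [if_pos ((hΦ ∅ (Finset.mem_powerset.mpr (Finset.empty_subset _))).mpr (by simp))]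
  | insert a C' ha ih =>
    rw [Finset.biUnion_insert]
    have hdBig : Disjoint (Bf a) (C'.biUnion Bf) := by
      rw [Finset.disjoint_biUnion_right]
      intro v hv
      exact hdisj a (Finset.mem_insert_self a C') v (Finset.mem_insert_of_mem hv)
        (fun h => ha (h ▸ hv))
    rw [Pr_factor hdBig (Φ₁ := Φv a) (Φ₂ := fun t => ∀ v ∈ C', Φv v (t ∩ Bf v))]
    · rw [Finset.prod_insert ha]
      congr 1
      exact ih (fun x hx y hy => hdisj x (Finset.mem_insert_of_mem hx) y
        (Finset.mem_insert_of_mem hy)) _ (fun s _ => Iff.rfl)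
    · intro s₁ hs₁ s₂ hs₂
      simp only [Finset.mem_powerset] at hs₁ hs₂
      have hsub : s₁ ∪ s₂ ⊆ (insert a C').biUnion Bf := by
        rw [Finset.biUnion_insert]
        exact Finset.union_subset_union hs₁ hs₂
      rw [hΦ (s₁ ∪ s₂) (Finset.mem_powerset.mpr hsub)]
      have key1 : (s₁ ∪ s₂) ∩ Bf a = s₁ := by
        rw [Finset.union_inter_distrib_right, Finset.inter_eq_left.mpr hs₁,
          Finset.disjoint_iff_inter_eq_empty.mp
            ((hdBig.symm.mono_left (hs₂.trans (le_refl _))))]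
        exact Finset.union_empty s₁
      have key2 : ∀ v ∈ C', (s₁ ∪ s₂) ∩ Bf v = s₂ ∩ Bf v := by
        intro v hv
        rw [Finset.union_inter_distrib_right]
        have : s₁ ∩ Bf v = ∅ := by
          refine Finset.disjoint_iff_inter_eq_empty.mp ?_
          refine (hdisj a (Finset.mem_insert_self a C') v (Finset.mem_insert_of_mem hv)
            (fun h => ha (h ▸ hv))).mono_left hs₁
        rw [this, Finset.empty_union]
      constructor
      · intro h
        refine ⟨by rw [← key1]; exact h a (Finset.mem_insert_self a C'), fun v hv => ?_⟩
        rw [← key2 v hv]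
        exact h v (Finset.mem_insert_of_mem hv)
      · rintro ⟨h1, h2⟩ v hv
        rcases Finset.mem_insert.mp hv with rfl | hv'
        · rw [key1]; exact h1
        · rw [key2 v hv']; exact h2 v hv'

lemma Pr_eq_empty (B : Finset ι) : Pr p B (fun s => s = ∅) = (1 - p) ^ B.card := by
  classical
  unfold Pr
  refine (Finset.sum_eq_single_of_mem (∅ : Finset ι)
    (Finset.mem_powerset.mpr (Finset.empty_subset B)) (fun b _ hb => if_neg hb)).trans ?_
  simp

lemma Pr_ne_empty (hp : p + (1 - p) = 1) (B : Finset ι) :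
    Pr p B (fun s => s ≠ ∅) = 1 - (1 - p) ^ B.card := by
  classical
  have hsplit : Pr p B (fun s => s = ∅) + Pr p B (fun s => s ≠ ∅) = 1 := by
    unfold Pr
    rw [← Finset.sum_add_distrib]
    refine Eq.trans (Finset.sum_congr rfl fun s hs => ?_) (sum_weight hp B)
    by_cases h : s = ∅ <;> simp [h]
  have := Pr_eq_empty (p := p) B
  linarith

lemma sum_powerset_pow (x y : ℝ) (C : Finset ι) :
    ∑ N ∈ C.powerset, x ^ N.card * y ^ (C \ N).card = (x + y) ^ C.card := by
  have h := Finset.prod_add (fun _ : ι => x) (fun _ : ι => y) C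
  simp only [Finset.prod_const] at h
  exact h.symm

end Engine
section Graph
variable {V : Type*} [Fintype V] [DecidableEq V]

open Classical in
noncomputable def cutE (A C : Finset V) : Finset (Sym2 V) :=
  Finset.univ.filter (fun e => ∃ x ∈ A, ∃ y ∈ C, e = s(x, y))

open Classical in
noncomputable def insideE (C : Finset V) : Finset (Sym2 V) :=
  Finset.univ.filter (fun e => ¬ e.IsDiag ∧ ∀ x ∈ e, x ∈ C)

noncomputable def poolE (A C : Finset V) : Finset (Sym2 V) := cutE A C ∪ insideE C

def Gr (t : Finset (Sym2 V)) : SimpleGraph V := SimpleGraph.fromEdgeSet ↑t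

def Ev (A C : Finset V) (t : Finset (Sym2 V)) : Prop :=
  ∀ v ∈ C, ∃ a ∈ A, (Gr t).Reachable v a

open Classical in
noncomputable def nbhd (A C : Finset V) (t : Finset (Sym2 V)) : Finset V :=
  C.filter (fun v => ∃ x ∈ A, s(x, v) ∈ t)

lemma mem_cutE {A C : Finset V} {x y : V} :
    s(x, y) ∈ cutE A C ↔ (x ∈ A ∧ y ∈ C) ∨ (y ∈ A ∧ x ∈ C) := by
  classical
  simp only [cutE, Finset.mem_filter, Finset.mem_univ, true_and]
  constructor
  · rintro ⟨a, ha, c, hc, he⟩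
    rcases Sym2.eq_iff.mp he with ⟨rfl, rfl⟩ | ⟨rfl, rfl⟩
    · exact Or.inl ⟨ha, hc⟩
    · exact Or.inr ⟨ha, hc⟩
  · rintro (⟨hx, hy⟩ | ⟨hy, hx⟩)
    · exact ⟨x, hx, y, hy, rfl⟩
    · exact ⟨y, hy, x, hx, Sym2.eq_swap.symm⟩

lemma mem_insideE {C : Finset V} {x y : V} :
    s(x, y) ∈ insideE C ↔ x ≠ y ∧ x ∈ C ∧ y ∈ C := by
  classical
  simp only [insideE, Finset.mem_filter, Finset.mem_univ, true_and, Sym2.mk_isDiag_iff]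
  constructor
  · rintro ⟨hne, hall⟩
    exact ⟨hne, hall x (Sym2.mem_mk_left x y), hall y (Sym2.mem_mk_right x y)⟩
  · rintro ⟨hne, hx, hy⟩
    refine ⟨hne, fun z hz => ?_⟩
    rcases Sym2.mem_iff.mp hz with rfl | rfl
    · exact hx
    · exact hy

lemma disjoint_cut_inside {A C : Finset V} (hd : Disjoint A C) :
    Disjoint (cutE A C) (insideE C) := by
  rw [Finset.disjoint_left]
  intro e he he'
  induction e with
  | _ x y =>
    rcases mem_cutE.mp he with ⟨hx, hy⟩ | ⟨hy, hx⟩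
    · exact Finset.disjoint_left.mp hd hx (mem_insideE.mp he').2.1
    · exact Finset.disjoint_left.mp hd hy (mem_insideE.mp he').2.2

lemma inside_split {N C : Finset V} (hN : N ⊆ C) :
    insideE C = insideE N ∪ poolE N (C \ N) := by
  ext e
  induction e with
  | _ x y =>
    simp only [poolE, Finset.mem_union, mem_insideE, mem_cutE, Finset.mem_sdiff]
    constructor
    · rintro ⟨hne, hx, hy⟩
      by_cases hxN : x ∈ N <;> by_cases hyN : y ∈ N
      · exact Or.inl ⟨hne, hxN, hyN⟩
      · exact Or.inr (Or.inl (Or.inl ⟨hxN, hy, hyN⟩))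
      · exact Or.inr (Or.inl (Or.inr ⟨hyN, hx, hxN⟩))
      · exact Or.inr (Or.inr ⟨hne, ⟨hx, hxN⟩, ⟨hy, hyN⟩⟩)
    · rintro (⟨hne, hx, hy⟩ | (⟨hxN, hyC, hyN⟩ | ⟨hyN, hxC, hxN⟩) | ⟨hne, ⟨hxC, _⟩, ⟨hyC, _⟩⟩)
      · exact ⟨hne, hN hx, hN hy⟩
      · exact ⟨fun h => hyN (h ▸ hxN), hN hxN, hyC⟩
      · exact ⟨fun h => hxN (h ▸ hyN), hxC, hN hyN⟩
      · exact ⟨hne, hxC, hyC⟩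

lemma disjoint_inside_pool (N C : Finset V) :
    Disjoint (insideE N) (poolE N (C \ N)) := by
  rw [Finset.disjoint_left]
  intro e he he'
  induction e with
  | _ x y =>
    obtain ⟨hne, hx, hy⟩ := mem_insideE.mp he
    rcases Finset.mem_union.mp he' with hc | hi
    · rcases mem_cutE.mp hc with ⟨_, h2⟩ | ⟨_, h2⟩
      · exact (Finset.mem_sdiff.mp h2).2 hy
      · exact (Finset.mem_sdiff.mp h2).2 hx
    · exact (Finset.mem_sdiff.mp (mem_insideE.mp hi).2.1).2 hx

lemma cutE_biUnion (A C : Finset V) :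
    cutE A C = C.biUnion (fun v => cutE A {v}) := by
  ext e
  induction e with
  | _ x y =>
    simp only [Finset.mem_biUnion, mem_cutE, Finset.mem_singleton]
    constructor
    · rintro (⟨hx, hy⟩ | ⟨hy, hx⟩)
      · exact ⟨y, hy, Or.inl ⟨hx, rfl⟩⟩
      · exact ⟨x, hx, Or.inr ⟨hy, rfl⟩⟩
    · rintro ⟨v, hv, (⟨hx, rfl⟩ | ⟨hy, rfl⟩)⟩
      · exact Or.inl ⟨hx, hv⟩
      · exact Or.inr ⟨hy, hv⟩

lemma cutE_pairwise_disjoint {A C : Finset V} (hd : Disjoint A C) :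
    ∀ x ∈ C, ∀ y ∈ C, x ≠ y → Disjoint (cutE A {x}) (cutE A {y}) := by
  intro u hu v hv huv
  rw [Finset.disjoint_left]
  intro e he he'
  induction e with
  | _ x y =>
    rcases mem_cutE.mp he with ⟨hx, hy⟩ | ⟨hy, hx⟩ <;>
      rcases mem_cutE.mp he' with ⟨hx', hy'⟩ | ⟨hy', hx'⟩ <;>
        simp only [Finset.mem_singleton] at *
    · exact huv (by rw [← hy, hy'])
    · exact Finset.disjoint_left.mp hd hy' (hy ▸ hu)
    · exact Finset.disjoint_left.mp hd hy (hy' ▸ hv)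
    · exact huv (by rw [← hx, hx'])

lemma card_cutE_singleton {A : Finset V} {v : V} (hv : v ∉ A) :
    (cutE A {v}).card = A.card := by
  classical
  rw [← Finset.card_image_of_injOn (f := fun x => s(x, v)) (s := A)]
  · congr 1
    ext e
    induction e with
    | _ x y =>
      simp only [Finset.mem_image, mem_cutE, Finset.mem_singleton]
      constructor
      · rintro (⟨hx, rfl⟩ | ⟨hy, rfl⟩)
        · exact ⟨x, hx, rfl⟩
        · exact ⟨y, hy, Sym2.eq_swap.symm⟩
      · rintro ⟨a, ha, he⟩
        rcases Sym2.eq_iff.mp he.symm with ⟨rfl, rfl⟩ | ⟨rfl, rfl⟩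
        · exact Or.inl ⟨ha, rfl⟩
        · exact Or.inr ⟨ha, rfl⟩
  · intro a ha b hb he
    simp only at he
    rcases Sym2.eq_iff.mp he with ⟨h1, _⟩ | ⟨h1, h2⟩
    · exact h1
    · exact absurd (h2 ▸ hb) hv

end Graph

section Graph2
variable {V : Type*} [Fintype V] [DecidableEq V]

lemma nbhd_subset (A C : Finset V) (t : Finset (Sym2 V)) : nbhd A C t ⊆ C :=
  Finset.filter_subset _ _

lemma nbhd_union_inside {A C : Finset V} (hd : Disjoint A C) (t₁ t₂ : Finset (Sym2 V))
    (ht₂ : t₂ ⊆ insideE C) : nbhd A C (t₁ ∪ t₂) = nbhd A C t₁ := by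
  classical
  unfold nbhd
  refine Finset.filter_congr fun v hv => ?_
  constructor
  · rintro ⟨x, hx, hmem⟩
    rcases Finset.mem_union.mp hmem with h | h
    · exact ⟨x, hx, h⟩
    · exact absurd (mem_insideE.mp (ht₂ h)).2.1 (Finset.disjoint_left.mp hd hx)
  · rintro ⟨x, hx, hmem⟩
    exact ⟨x, hx, Finset.mem_union_left _ hmem⟩

lemma nbhd_mem_iff {A C : Finset V} {t : Finset (Sym2 V)} {v : V} (hv : v ∈ C) :
    v ∈ nbhd A C t ↔ t ∩ cutE A {v} ≠ ∅ := by
  classical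
  unfold nbhd
  rw [Finset.mem_filter]
  constructor
  · rintro ⟨-, x, hx, hm⟩
    refine fun hemp => ?_
    have : s(x, v) ∈ t ∩ cutE A {v} :=
      Finset.mem_inter.mpr ⟨hm, mem_cutE.mpr (Or.inl ⟨hx, Finset.mem_singleton_self v⟩)⟩
    rw [hemp] at this
    exact absurd this (Finset.notMem_empty _)
  · intro hne
    obtain ⟨e, he⟩ := Finset.nonempty_iff_ne_empty.mpr hne
    obtain ⟨het, hec⟩ := Finset.mem_inter.mp he
    refine ⟨hv, ?_⟩
    induction e with
    | _ x y =>
      rcases mem_cutE.mp hec with ⟨hx, hy⟩ | ⟨hy, hx⟩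
      · exact ⟨x, hx, (Finset.mem_singleton.mp hy) ▸ het⟩
      · exact ⟨y, hy, (Finset.mem_singleton.mp hx) ▸ (Sym2.eq_swap ▸ het)⟩

lemma pool_subset_inside {N C : Finset V} (hNC : N ⊆ C) :
    poolE N (C \ N) ⊆ insideE C := by
  rw [inside_split hNC]
  exact Finset.subset_union_right

lemma walk_to_nbhd {A C : Finset V} (hd : Disjoint A C) {t : Finset (Sym2 V)}
    (ht : t ⊆ poolE A C) {v a : V} (ha : a ∈ A)
    (w : (Gr t).Walk v a) (hv : v ∈ C) :
    ∃ n ∈ nbhd A C t,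
      (Gr (t ∩ poolE (nbhd A C t) (C \ nbhd A C t))).Reachable v n := by
  induction w with
  | nil => exact absurd hv (Finset.disjoint_left.mp hd ha)
  | @cons v u a h w ih =>
    by_cases hvM : v ∈ nbhd A C t
    · exact ⟨v, hvM, SimpleGraph.Reachable.refl v⟩
    · obtain ⟨he, hne⟩ := (SimpleGraph.fromEdgeSet_adj _).mp h
      have he' : s(v, u) ∈ t := he
      rcases Finset.mem_union.mp (ht he') with hcut | hins
      · rcases mem_cutE.mp hcut with ⟨hvA, huC⟩ | ⟨huA, hvC⟩
        · exact absurd hv (Finset.disjoint_left.mp hd hvA)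
        · exact absurd ((Finset.mem_filter.mpr ⟨hv, u, huA, Sym2.eq_swap ▸ he'⟩ :
            v ∈ nbhd A C t)) hvM
      · obtain ⟨-, hvC, huC⟩ := mem_insideE.mp hins
        by_cases huM : u ∈ nbhd A C t
        · refine ⟨u, huM, SimpleGraph.Adj.reachable ?_⟩
          refine (SimpleGraph.fromEdgeSet_adj _).mpr ⟨?_, hne⟩
          refine Finset.mem_coe.mpr (Finset.mem_inter.mpr ⟨he', Finset.mem_union_left _ ?_⟩)
          exact mem_cutE.mpr (Or.inr ⟨huM, Finset.mem_sdiff.mpr ⟨hvC, hvM⟩⟩)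
        · obtain ⟨n, hn, r⟩ := ih ha huC
          refine ⟨n, hn, SimpleGraph.Reachable.trans (SimpleGraph.Adj.reachable ?_) r⟩
          refine (SimpleGraph.fromEdgeSet_adj _).mpr ⟨?_, hne⟩
          refine Finset.mem_coe.mpr (Finset.mem_inter.mpr ⟨he', Finset.mem_union_right _ ?_⟩)
          exact mem_insideE.mpr ⟨hne, Finset.mem_sdiff.mpr ⟨hvC, hvM⟩,
            Finset.mem_sdiff.mpr ⟨huC, huM⟩⟩

end Graph2

section Main
variable {V : Type*} [Fintype V] [DecidableEq V]

lemma ev_equiv {A C N : Finset V} (hd : Disjoint A C) (hNC : N ⊆ C) :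
    ∀ s₁ ∈ (cutE A C).powerset, ∀ s₂ ∈ (insideE C).powerset,
      ((Ev A C (s₁ ∪ s₂) ∧ nbhd A C (s₁ ∪ s₂) = N) ↔
        (nbhd A C s₁ = N ∧ Ev N (C \ N) (s₂ ∩ poolE N (C \ N)))) := by
  intro s₁ hs₁ s₂ hs₂
  rw [Finset.mem_powerset] at hs₁ hs₂
  have hnb : nbhd A C (s₁ ∪ s₂) = nbhd A C s₁ := nbhd_union_inside hd s₁ s₂ hs₂
  have hpool : s₁ ∪ s₂ ⊆ poolE A C :=
    Finset.union_subset (hs₁.trans Finset.subset_union_left)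
      (hs₂.trans Finset.subset_union_right)
  have hinter : (s₁ ∪ s₂) ∩ poolE N (C \ N) = s₂ ∩ poolE N (C \ N) := by
    rw [Finset.union_inter_distrib_right]
    have : s₁ ∩ poolE N (C \ N) = ∅ := by
      refine Finset.disjoint_iff_inter_eq_empty.mp ?_
      exact ((disjoint_cut_inside hd).mono_right (pool_subset_inside hNC)).mono_left hs₁
    rw [this, Finset.empty_union]
  constructor
  · rintro ⟨hEv, hN⟩
    rw [hnb] at hN
    refine ⟨hN, fun v hv => ?_⟩
    obtain ⟨hvC, hvN⟩ := Finset.mem_sdiff.mp hv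
    obtain ⟨a, ha, r⟩ := hEv v hvC
    obtain ⟨n, hn, r'⟩ := r.elim (fun w => walk_to_nbhd hd hpool ha w hvC)
    rw [hnb, hN] at hn
    refine ⟨n, hn, ?_⟩
    rw [← hinter]
    have hrw : nbhd A C (s₁ ∪ s₂) = N := by rw [hnb, hN]
    rw [← hrw]
    exact r'
  · rintro ⟨hN, hEv'⟩
    have hNeq : nbhd A C (s₁ ∪ s₂) = N := by rw [hnb, hN]
    refine ⟨fun v hvC => ?_, hNeq⟩
    have hreach : ∀ n ∈ N, ∃ a ∈ A, (Gr (s₁ ∪ s₂)).Reachable n a := by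
      intro n hn
      rw [← hN] at hn
      obtain ⟨-, x, hx, hm⟩ := Finset.mem_filter.mp hn
      refine ⟨x, hx, (SimpleGraph.Adj.reachable ?_).symm⟩
      refine (SimpleGraph.fromEdgeSet_adj _).mpr ⟨Finset.mem_coe.mpr
        (Finset.mem_union_left _ hm), ?_⟩
      intro hxy
      exact Finset.disjoint_left.mp hd hx (hxy ▸ (nbhd_subset A C s₁ (hN ▸ hn)))
    by_cases hvN : v ∈ N
    · exact hreach v hvN
    · obtain ⟨n, hn, r⟩ := hEv' v (Finset.mem_sdiff.mpr ⟨hvC, hvN⟩)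
      obtain ⟨a, ha, r'⟩ := hreach n hn
      refine ⟨a, ha, SimpleGraph.Reachable.trans ?_ r'⟩
      refine SimpleGraph.Reachable.mono (SimpleGraph.fromEdgeSet_mono ?_) r
      intro e he
      exact Finset.mem_coe.mpr (Finset.mem_union_right _
        (Finset.mem_inter.mp (Finset.mem_coe.mp he)).1)
lemma nu_bound {p : ℝ} (hp0 : 0 ≤ p) (hp1 : p ≤ 1) :
    ∀ (m : ℕ) (A C : Finset V), Disjoint A C → C.card = m →
      Pr p (poolE A C) (Ev A C) ≤ (1 - (1 - p) ^ (A.card + m)) ^ m := by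
  have hq0 : (0:ℝ) ≤ 1 - p := by linarith
  have hq1 : (1:ℝ) - p ≤ 1 := by linarith
  intro m
  induction m using Nat.strong_induction_on with
  | _ m ih =>
    intro A C hd hC
    rcases Nat.eq_zero_or_pos m with rfl | hm
    · simpa using Pr_le_one hp0 hp1 (poolE A C) (Ev A C)
    · have hCne : C.Nonempty := Finset.card_pos.mp (hC ▸ hm)
      set q : ℝ := 1 - p with hq
      have hqa0 : (0:ℝ) ≤ q ^ A.card := pow_nonneg hq0 _
      have hqa1 : q ^ A.card ≤ 1 := pow_le_one₀ hq0 hq1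
      have hqm1 : q ^ m ≤ 1 := pow_le_one₀ hq0 hq1
      have hqm0 : (0:ℝ) ≤ q ^ m := pow_nonneg hq0 _
      rw [Pr_partition (Ev A C) (nbhd A C) C.powerset
        (fun s _ => Finset.mem_powerset.mpr (nbhd_subset A C s))]
      have hbound : ∀ N ∈ C.powerset,
          Pr p (poolE A C) (fun s => Ev A C s ∧ nbhd A C s = N) ≤
            (1 - q ^ A.card) ^ N.card * (q ^ A.card * (1 - q ^ m)) ^ (C \ N).card := by
        intro N hNmem
        have hNC : N ⊆ C := Finset.mem_powerset.mp hNmem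
        have hcards : (C \ N).card + N.card = m := by
          rw [← hC]; exact Finset.card_sdiff_add_card_eq_card hNC
        -- factorize
        have hfac : Pr p (poolE A C) (fun s => Ev A C s ∧ nbhd A C s = N)
            = Pr p (cutE A C) (fun s₁ => nbhd A C s₁ = N)
              * (Pr p (insideE N) (fun _ => True)
                 * Pr p (poolE N (C \ N)) (Ev N (C \ N))) := by
          rw [poolE, Pr_factor (disjoint_cut_inside hd)
            (Φ₁ := fun s₁ => nbhd A C s₁ = N)
            (Φ₂ := fun s₂ => Ev N (C \ N) (s₂ ∩ poolE N (C \ N)))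
            (ev_equiv hd hNC)]
          congr 1
          rw [inside_split hNC, Pr_factor (disjoint_inside_pool N C)
            (Φ₁ := fun _ => True) (Φ₂ := fun t₂ => Ev N (C \ N) (t₂ ∩ poolE N (C \ N)))]
          · congr 1
            refine Pr_congr fun t ht => ?_
            rw [Finset.inter_eq_left.mpr (Finset.mem_powerset.mp ht)]
          · intro t₁ ht₁ t₂ ht₂
            rw [Finset.mem_powerset] at ht₁ ht₂
            have : (t₁ ∪ t₂) ∩ poolE N (C \ N) = t₂ ∩ poolE N (C \ N) := by
              rw [Finset.union_inter_distrib_right,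
                Finset.disjoint_iff_inter_eq_empty.mp
                  ((disjoint_inside_pool N C).mono_left ht₁), Finset.empty_union]
            rw [this]
            exact (and_iff_right trivial).symm
        -- compute the cut factor
        have hcut : Pr p (cutE A C) (fun s₁ => nbhd A C s₁ = N)
            = (1 - q ^ A.card) ^ N.card * (q ^ A.card) ^ (C \ N).card := by
          rw [cutE_biUnion A C, Pr_prod C (fun v => cutE A {v}) (cutE_pairwise_disjoint hd)
            _ (fun v t => if v ∈ N then t ≠ ∅ else t = ∅) ?_]
          · rw [← Finset.prod_filter_mul_prod_filter_not C (fun v => v ∈ N)]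
            have h1 : C.filter (fun v => v ∈ N) = N := by
              rw [Finset.filter_mem_eq_inter, Finset.inter_eq_right.mpr hNC]
            have h2 : C.filter (fun v => v ∉ N) = C \ N := by
              ext x; simp [Finset.mem_sdiff]
            rw [h1, h2]
            congr 1
            · refine (Finset.prod_congr rfl fun v hv => ?_).trans (Finset.prod_const _)
              have hvA : v ∉ A := Finset.disjoint_right.mp hd (hNC hv)
              rw [show (fun t => if v ∈ N then t ≠ ∅ else t = ∅) = fun t => t ≠ ∅ from
                funext fun t => if_pos hv]
              rw [Pr_ne_empty (by ring) (cutE A {v}), card_cutE_singleton hvA]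
            · refine (Finset.prod_congr rfl fun v hv => ?_).trans (Finset.prod_const _)
              obtain ⟨hvC, hvN⟩ := Finset.mem_sdiff.mp hv
              have hvA : v ∉ A := Finset.disjoint_right.mp hd hvC
              rw [show (fun t => if v ∈ N then t ≠ ∅ else t = ∅) = fun t => t = ∅ from
                funext fun t => if_neg hvN]
              rw [Pr_eq_empty (cutE A {v}), card_cutE_singleton hvA]
          · intro s hs
            rw [← cutE_biUnion A C] at hs
            rw [Finset.mem_powerset] at hs
            constructor
            · intro hEq v hv
              by_cases hvN : v ∈ N
              · rw [if_pos hvN]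
                exact (nbhd_mem_iff hv).mp (hEq ▸ hvN)
              · rw [if_neg hvN]
                by_contra hne
                exact hvN (hEq ▸ (nbhd_mem_iff hv).mpr hne)
            · intro hall
              ext v
              constructor
              · intro hvnb
                have hvC : v ∈ C := nbhd_subset A C s hvnb
                have := hall v hvC
                by_cases hvN : v ∈ N
                · exact hvN
                · rw [if_neg hvN] at this
                  exact absurd this ((nbhd_mem_iff hvC).mp hvnb)
              · intro hvN
                have hvC : v ∈ C := hNC hvN
                have := hall v hvC
                rw [if_pos hvN] at this
                exact (nbhd_mem_iff hvC).mpr this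
        rw [hfac, hcut, Pr_true (by ring), one_mul]
        -- bound the recursive factor
        have hrec : Pr p (poolE N (C \ N)) (Ev N (C \ N)) ≤ (1 - q ^ m) ^ (C \ N).card := by
          rcases Finset.eq_empty_or_nonempty N with rfl | hNne
          · have : Pr p (poolE (∅ : Finset V) (C \ ∅)) (Ev (∅ : Finset V) (C \ ∅)) = 0 := by
              refine Pr_of_forall_not fun s _ hEv => ?_
              obtain ⟨v, hv⟩ := hCne
              obtain ⟨a, ha, -⟩ := hEv v (by rw [Finset.sdiff_empty]; exact hv)
              exact absurd ha (Finset.notMem_empty a)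
            rw [this]
            exact pow_nonneg (by linarith) _
          · have hNcard : 0 < N.card := Finset.card_pos.mpr hNne
            have hlt : (C \ N).card < m := by omega
            have hdis' : Disjoint N (C \ N) := Finset.disjoint_sdiff
            have := ih (C \ N).card hlt N (C \ N) hdis' rfl
            rwa [show N.card + (C \ N).card = m by omega] at this
        calc (1 - q ^ A.card) ^ N.card * (q ^ A.card) ^ (C \ N).card
              * Pr p (poolE N (C \ N)) (Ev N (C \ N))
            ≤ (1 - q ^ A.card) ^ N.card * (q ^ A.card) ^ (C \ N).card
              * (1 - q ^ m) ^ (C \ N).card := by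
              refine mul_le_mul_of_nonneg_left hrec ?_
              exact mul_nonneg (pow_nonneg (by linarith) _) (pow_nonneg hqa0 _)
          _ = (1 - q ^ A.card) ^ N.card * (q ^ A.card * (1 - q ^ m)) ^ (C \ N).card := by
              rw [mul_pow, mul_assoc]
      calc ∑ N ∈ C.powerset, Pr p (poolE A C) (fun s => Ev A C s ∧ nbhd A C s = N)
          ≤ ∑ N ∈ C.powerset,
              (1 - q ^ A.card) ^ N.card * (q ^ A.card * (1 - q ^ m)) ^ (C \ N).card :=
            Finset.sum_le_sum hbound
        _ = ((1 - q ^ A.card) + q ^ A.card * (1 - q ^ m)) ^ C.card :=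
            sum_powerset_pow _ _ C
        _ = (1 - q ^ (A.card + m)) ^ m := by
            rw [hC, pow_add]
            ring_nf

end Main

section Final

lemma mu_eq_Pr (k : ℕ) (p : ℝ) :
    mu k p = Pr p ((⊤ : SimpleGraph (Fin k)).edgeFinset)
      (fun s => (Gr s).Connected) := by
  classical
  have hset : {G : SimpleGraph (Fin k) | G.Connected} =
      ↑(Finset.univ.filter (fun G : SimpleGraph (Fin k) => G.Connected)) := by
    ext G; simp
  rw [mu, erProb, hset, finsum_mem_coe_finset, Finset.sum_filter]
  unfold Pr
  refine Finset.sum_nbij' (fun G => G.edgeFinset) (fun s => SimpleGraph.fromEdgeSet ↑s)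
    ?_ ?_ ?_ ?_ ?_
  · intro G _
    exact Finset.mem_powerset.mpr (SimpleGraph.edgeFinset_mono le_top)
  · intro s _
    exact Finset.mem_univ _
  · intro G _
    rw [SimpleGraph.coe_edgeFinset, SimpleGraph.fromEdgeSet_edgeSet]
  · intro s hs
    have hnd : ∀ e ∈ s, ¬ e.IsDiag := by
      intro e he
      have h1 := Finset.mem_powerset.mp hs he
      have h2 := SimpleGraph.mem_edgeFinset.mp h1
      rw [SimpleGraph.edgeSet_top] at h2
      exact h2
    ext e
    simp only [SimpleGraph.edgeFinset, Set.mem_toFinset, SimpleGraph.edgeSet_fromEdgeSet,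
      Set.mem_diff, Finset.mem_coe, Set.mem_setOf_eq]
    constructor
    · rintro ⟨he, -⟩
      exact he
    · intro he
      exact ⟨he, hnd e he⟩
  · intro G _
    have h1 : edgeCount G = G.edgeFinset.card := by
      rw [edgeCount, Nat.card_coe_set_eq, Set.ncard_eq_toFinset_card']
      exact congrArg Finset.card (by ext e; simp)
    have h2 : ((⊤ : SimpleGraph (Fin k)).edgeFinset \ G.edgeFinset).card
        = k.choose 2 - edgeCount G := by
      rw [Finset.card_sdiff_of_subset (SimpleGraph.edgeFinset_mono le_top), h1,
        SimpleGraph.card_edgeFinset_top_eq_card_choose_two, Fintype.card_fin]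
    have h3 : Gr (G.edgeFinset) = G := by
      rw [Gr, SimpleGraph.coe_edgeFinset, SimpleGraph.fromEdgeSet_edgeSet]
    dsimp only
    simp only [h3]
    by_cases hc : G.Connected
    · rw [if_pos hc, if_pos hc, graphWeight, h1, h2, h1]
    · rw [if_neg hc, if_neg hc]

end Final

lemma top_edge_pool {k : ℕ} (v0 : Fin k) :
    (⊤ : SimpleGraph (Fin k)).edgeFinset = poolE {v0} ({v0}ᶜ) := by
  classical
  ext e
  induction e with
  | _ x y =>
    rw [SimpleGraph.mem_edgeFinset]
    simp only [SimpleGraph.edgeSet_top, Set.mem_setOf_eq, Sym2.mk_isDiag_iff, poolE,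
      Finset.mem_union, mem_cutE, mem_insideE, Finset.mem_singleton, Finset.mem_compl]
    constructor
    · intro hne
      by_cases hx : x = v0
      · exact Or.inl (Or.inl ⟨hx, fun h => hne (hx ▸ h ▸ rfl)⟩)
      · by_cases hy : y = v0
        · exact Or.inl (Or.inr ⟨hy, hx⟩)
        · exact Or.inr ⟨hne, hx, hy⟩
    · rintro ((⟨hx, hy⟩ | ⟨hy, hx⟩) | ⟨hne, -, -⟩)
      · exact fun h => hy ((show x = y from h).symm.trans hx)
      · exact fun h => hx ((show x = y from h).trans hy)
      · exact hne

lemma conn_iff_ev {k : ℕ} (v0 : Fin k) (s : Finset (Sym2 (Fin k))) :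
    (Gr s).Connected ↔ Ev {v0} ({v0}ᶜ) s := by
  constructor
  · intro h v _
    exact ⟨v0, Finset.mem_singleton_self _, h.preconnected v v0⟩
  · intro h
    have hall : ∀ v, (Gr s).Reachable v v0 := by
      intro v
      by_cases hv : v = v0
      · rw [hv]
      · obtain ⟨a, ha, r⟩ := h v (Finset.mem_compl.mpr (by simpa using hv))
        rwa [Finset.mem_singleton.mp ha] at r
    exact (SimpleGraph.connected_iff _).mpr ⟨fun u w => (hall u).trans (hall w).symm, ⟨v0⟩⟩


/-- Upper bound `μ_k(p) ≤ (1 - (1-p)^k)^{k-1}` for the connectivity probability. -/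
theorem mu_le_one_sub_pow (p : ℝ) (hp0 : 0 ≤ p) (hp1 : p ≤ 1) (k : ℕ) (hk : 1 ≤ k) :
    mu k p ≤ (1 - (1 - p) ^ k) ^ (k - 1) := by
  classical
  set v0 : Fin k := ⟨0, hk⟩ with hv0
  rw [mu_eq_Pr k p, top_edge_pool v0, Pr_congr (fun s _ => conn_iff_ev v0 s)]
  have hcc : ({v0}ᶜ : Finset (Fin k)).card = k - 1 := by
    rw [Finset.card_compl, Finset.card_singleton, Fintype.card_fin]
  have hbound := nu_bound hp0 hp1 (({v0}ᶜ : Finset (Fin k)).card) {v0} ({v0}ᶜ)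
    disjoint_compl_right rfl
  rw [Finset.card_singleton, hcc] at hbound
  rwa [show 1 + (k - 1) = k by omega] at hbound


end ERGraph
end

section
/- Let Λ = (λ_k)_{k∈ℕ} be a sequence in [0,∞)^ℕ and let α = (α_i)_{i∈ℕ} be a nonincreasing sequence in [0,1]^ℕ such that ∑_{k≥1} k λ_k + ∑_{i≥1} α_i > 1. Then there exist R ∈ ℕ, ε ∈ (0,1), δ > 0, ρ > 0 and N₀ ∈ ℕ such that for every N > N₀ there is no ℓ ∈ ℕ₀^ℕ with ∑_{k≥1} k ℓ_k = N satisfying both d_R(ℓ/N, Λ) ≤ δ and D_ε(ℓ_{⌊·N⌋}, α) ≤ ρ. -/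
open scoped BigOperators

/-- The truncated distance `d_R(Λ,Λ̃) = ∑_{k=1}^R 2^{-k} |λ_k - λ̃_k|`
(sequences indexed by `k ≥ 1`). -/
noncomputable def dTrunc (R : ℕ) (x y : ℕ → ℝ) : ℝ :=
  ∑ k ∈ Finset.Icc 1 R, (2 : ℝ) ^ (-(k : ℤ)) * |x k - y k|

/-- The truncated distance `D_ε(α,α̃) = ∑_{i≥1} 2^{-i} |α_i - α̃_i| 1(max(α_i,α̃_i) ≥ ε)`
(here index `i : ℕ` represents `α_{i+1}`). -/
noncomputable def DTrunc (ε : ℝ) (x y : ℕ → ℝ) : ℝ :=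
  ∑' i : ℕ, (2 : ℝ) ^ (-((i : ℤ) + 1)) * (if ε ≤ max (x i) (y i) then |x i - y i| else 0)

/-- the nonincreasing sequence `ℓ_{⌊·N⌋}` listing `k/N` with multiplicity `ℓ_k`, padded by `0`. -/
noncomputable def sortedSeq (N : ℕ) (ℓ : ℕ → ℕ) : ℕ → ℝ := fun i =>
  (((((Finset.range (N + 1)).sum fun k => Multiset.replicate (ℓ k) k).sort (· ≤ ·)).reverse.getD
      i 0 : ℕ) : ℝ) / N

lemma aux_filter_sum_le (p : ℕ → Bool) (l : List ℕ) : (l.filter p).sum ≤ l.sum := by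
  induction l with
  | nil => simp
  | cons a t ih =>
    rw [List.filter_cons]
    by_cases h : p a <;> simp [h] <;> omega

lemma aux_sum_range_getD (M : ℕ) (l : List ℕ) (h : M ≤ l.length) :
    ∑ i ∈ Finset.range M, l.getD i 0 = (l.take M).sum := by
  induction M generalizing l with
  | zero => simp
  | succ n ih =>
    cases l with
    | nil => simp at h
    | cons a t =>
      rw [Finset.sum_range_succ']
      simp only [List.getD_cons_succ, List.getD_cons_zero, List.take_succ_cons, List.sum_cons]
      rw [ih t (by simpa using h)]
      omega

lemma aux_key (R M : ℕ) (L : List ℕ) (htop : ∀ i < M, R < L.getD i 0) :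
    (L.filter (fun x => x ≤ R)).sum + ∑ i ∈ Finset.range M, L.getD i 0 ≤ L.sum := by
  have hM : M ≤ L.length := by
    by_contra h
    push_neg at h
    have := htop L.length h
    rw [List.getD_eq_default] at this
    · omega
    · omega
  have h1 : ∑ i ∈ Finset.range M, L.getD i 0 = (L.take M).sum := aux_sum_range_getD M L hM
  have h2 : (L.take M).filter (fun x => x ≤ R) = [] := by
    rw [List.filter_eq_nil_iff]
    intro a ha
    obtain ⟨i, hi, hgi⟩ := List.mem_iff_getElem.mp ha
    have hiM : i < M := lt_of_lt_of_le hi (by simp)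
    have hiL : i < L.length := lt_of_lt_of_le hiM hM
    have := htop i hiM
    rw [List.getD_eq_getElem L 0 hiL] at this
    rw [List.getElem_take] at hgi
    simp only [decide_eq_true_eq]
    omega
  have h3 : (L.filter (fun x => x ≤ R)).sum ≤ (L.drop M).sum := by
    calc (L.filter (fun x => x ≤ R)).sum
        = ((L.take M ++ L.drop M).filter (fun x => x ≤ R)).sum := by rw [List.take_append_drop]
      _ = ((L.drop M).filter (fun x => x ≤ R)).sum := by rw [List.filter_append, h2]; simp
      _ ≤ (L.drop M).sum := aux_filter_sum_le _ _
  have := List.sum_take_add_sum_drop L M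
  omega

lemma aux_multiset_filter_sum (N R : ℕ) (ℓ : ℕ → ℕ) :
    ((((Finset.range (N + 1)).sum fun k => Multiset.replicate (ℓ k) k).filter (· ≤ R)).sum)
      = ∑ k ∈ Finset.range (N + 1), if k ≤ R then k * ℓ k else 0 := by
  let g : Multiset ℕ →+ ℕ :=
    { toFun := fun s => (s.filter (· ≤ R)).sum
      map_zero' := by simp
      map_add' := by intro s t; rw [Multiset.filter_add, Multiset.sum_add] }
  have := map_sum g (fun k => Multiset.replicate (ℓ k) k) (Finset.range (N + 1))
  simp only [g, AddMonoidHom.coe_mk, ZeroHom.coe_mk] at this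
  change ((∑ x ∈ Finset.range (N + 1), Multiset.replicate (ℓ x) x).filter (· ≤ R)).sum =
    ∑ x ∈ Finset.range (N + 1), ((Multiset.replicate (ℓ x) x).filter (· ≤ R)).sum at this
  rw [this]
  apply Finset.sum_congr rfl
  intro k _
  by_cases h : k ≤ R
  · rw [Multiset.filter_eq_self.mpr (by intro a ha; rw [Multiset.eq_of_mem_replicate ha]; exact h)]
    simp [Multiset.sum_replicate, h, Nat.mul_comm]
  · rw [Multiset.filter_eq_nil.mpr (by intro a ha; rw [Multiset.eq_of_mem_replicate ha]; exact h)]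
    simp [h]

lemma aux_multiset_sum (N : ℕ) (ℓ : ℕ → ℕ) :
    (((Finset.range (N + 1)).sum fun k => Multiset.replicate (ℓ k) k)).sum
      = ∑ k ∈ Finset.range (N + 1), k * ℓ k := by
  let g : Multiset ℕ →+ ℕ :=
    { toFun := Multiset.sum
      map_zero' := Multiset.sum_zero
      map_add' := Multiset.sum_add }
  have := map_sum g (fun k => Multiset.replicate (ℓ k) k) (Finset.range (N + 1))
  simp only [g, AddMonoidHom.coe_mk, ZeroHom.coe_mk] at this
  rw [this]
  exact Finset.sum_congr rfl fun k _ => by rw [Multiset.sum_replicate, smul_eq_mul, Nat.mul_comm]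

lemma aux_getD_le_sum (l : List ℕ) (i : ℕ) : l.getD i 0 ≤ l.sum := by
  by_cases h : i < l.length
  · rw [List.getD_eq_getElem l 0 h]
    exact List.le_sum_of_mem (List.getElem_mem h)
  · rw [List.getD_eq_default l 0 (by omega)]
    exact Nat.zero_le _

lemma aux_sum_range (ℓ : ℕ → ℕ) (N : ℕ)
    (hfin : (Set.Ici 1 ∩ Function.support fun k => k * ℓ k).Finite)
    (hsum : (∑ᶠ k ∈ Set.Ici 1, k * ℓ k) = N) :
    (∑ k ∈ Finset.range (N + 1), k * ℓ k = N) ∧ (∀ k, N < k → ℓ k = 0) := by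
  rw [finsum_mem_eq_sum _ hfin] at hsum
  have hle : ∀ k ∈ hfin.toFinset, k ≤ N := by
    intro k hk
    have hne : k * ℓ k ≠ 0 := ((Set.Finite.mem_toFinset hfin).mp hk).2
    have h1 := Finset.single_le_sum (f := fun k => k * ℓ k) (fun i _ => Nat.zero_le _) hk
    rw [hsum] at h1
    have hℓ : 1 ≤ ℓ k := by
      rcases Nat.eq_zero_or_pos (ℓ k) with h | h
      · exact absurd (by simp [h]) hne
      · exact h
    calc k ≤ k * ℓ k := Nat.le_mul_of_pos_right k hℓ
      _ ≤ N := h1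
  have hz : ∀ k, N < k → ℓ k = 0 := by
    intro k hk
    by_contra h
    have hk' : k ∈ hfin.toFinset := by
      rw [Set.Finite.mem_toFinset]
      exact ⟨Set.mem_Ici.mpr (by omega), Nat.mul_ne_zero (by omega) h⟩
    have := hle k hk'
    omega
  refine ⟨?_, hz⟩
  have heq : ∑ k ∈ hfin.toFinset, k * ℓ k = ∑ k ∈ Finset.range (N + 1), k * ℓ k := by
    apply Finset.sum_subset
    · intro k hk
      simp only [Finset.mem_range]
      exact Nat.lt_succ_of_le (hle k hk)
    · intro k _ hk
      rw [Set.Finite.mem_toFinset] at hk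
      simp only [Set.mem_inter_iff, Set.mem_Ici, Function.mem_support, not_and, not_not] at hk
      by_cases h1 : 1 ≤ k
      · exact hk h1
      · simp [Nat.lt_one_iff.mp (not_le.mp h1)]
  rw [← heq, hsum]

lemma aux_extract (Λ : ℕ → ℝ) (hΛ : ∀ k, 0 ≤ Λ k) (α : ℕ → ℝ) (hα0 : ∀ i, 0 ≤ α i)
    (hmass : 1 < (∑' k : ℕ, (k : ENNReal) * ENNReal.ofReal (Λ k)) +
        ∑' i : ℕ, ENNReal.ofReal (α i)) :
    ∃ n : ℕ, 1 < (∑ k ∈ Finset.range (n + 1), (k : ℝ) * Λ k) +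
      ∑ i ∈ Finset.range (n + 1), α i := by
  rw [ENNReal.tsum_eq_iSup_sum, ENNReal.tsum_eq_iSup_sum] at hmass
  rw [ENNReal.iSup_add_iSup (fun s t => ⟨s ∪ t, by
    gcongr
    · exact Finset.subset_union_left
    · exact Finset.subset_union_right⟩)] at hmass
  rw [lt_iSup_iff] at hmass
  obtain ⟨s, hs⟩ := hmass
  set n := s.sup id with hn
  refine ⟨n, ?_⟩
  have hsub : s ⊆ Finset.range (n + 1) := by
    intro x hx
    simp only [Finset.mem_range]
    exact Nat.lt_succ_of_le (Finset.le_sup (f := id) hx)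
  have hmono : (∑ k ∈ s, (k : ENNReal) * ENNReal.ofReal (Λ k)) + ∑ i ∈ s, ENNReal.ofReal (α i)
      ≤ (∑ k ∈ Finset.range (n+1), (k : ENNReal) * ENNReal.ofReal (Λ k)) +
        ∑ i ∈ Finset.range (n+1), ENNReal.ofReal (α i) :=
    add_le_add (Finset.sum_le_sum_of_subset hsub) (Finset.sum_le_sum_of_subset hsub)
  have h2 : 1 < (∑ k ∈ Finset.range (n+1), (k : ENNReal) * ENNReal.ofReal (Λ k)) +
        ∑ i ∈ Finset.range (n+1), ENNReal.ofReal (α i) := lt_of_lt_of_le hs hmono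
  have e1 : (∑ k ∈ Finset.range (n+1), (k : ENNReal) * ENNReal.ofReal (Λ k))
      = ENNReal.ofReal (∑ k ∈ Finset.range (n+1), (k : ℝ) * Λ k) := by
    rw [ENNReal.ofReal_sum_of_nonneg (fun i _ => mul_nonneg (Nat.cast_nonneg i) (hΛ i))]
    exact Finset.sum_congr rfl fun k _ => by
      rw [ENNReal.ofReal_mul (Nat.cast_nonneg k), ENNReal.ofReal_natCast]
  have e2 : (∑ i ∈ Finset.range (n+1), ENNReal.ofReal (α i))
      = ENNReal.ofReal (∑ i ∈ Finset.range (n+1), α i) := by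
    rw [ENNReal.ofReal_sum_of_nonneg (fun i _ => hα0 i)]
  rw [e1, e2, ← ENNReal.ofReal_add (Finset.sum_nonneg fun i _ =>
    mul_nonneg (Nat.cast_nonneg i) (hΛ i)) (Finset.sum_nonneg fun i _ => hα0 i)] at h2
  have := ENNReal.one_lt_ofReal.mp h2
  linarith

lemma aux_two_pow_cancel (k : ℕ) : (2:ℝ)^k * (2:ℝ)^(-(k:ℤ)) = 1 := by
  rw [← zpow_natCast (2:ℝ) k, ← zpow_add₀ (by norm_num : (2:ℝ) ≠ 0)]
  norm_num
lemma aux_two_pow_cancel' (i : ℕ) : (2:ℝ)^(i+1) * (2:ℝ)^(-((i:ℤ)+1)) = 1 := by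
  have h : -((i:ℤ)+1) = -(((i+1:ℕ)):ℤ) := by push_cast; ring
  rw [h]
  exact aux_two_pow_cancel (i+1)
lemma aux_two_pow_neg (i : ℕ) : (2:ℝ) ^ (-((i:ℤ)+1)) = (1/2:ℝ)^i * (1/2) := by
  have h : -((i:ℤ)+1) = -(((i+1:ℕ)):ℤ) := by push_cast; ring
  rw [h, zpow_neg, zpow_natCast, pow_succ, mul_inv, one_div, inv_pow]

set_option maxHeartbeats 1000000 in
/-- If `∑_{k≥1} k λ_k + ∑_{i≥1} α_i > 1`, then for suitable `R, ε, δ, ρ` and all large `N`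
no admissible `ℓ` is simultaneously `δ`-close to `Λ` microscopically and `ρ`-close to `α`
macroscopically. -/
theorem no_admissible_configuration_of_total_mass_gt_one
    (Λ : ℕ → ℝ) (hΛ : ∀ k, 0 ≤ Λ k)
    (α : ℕ → ℝ) (hanti : Antitone α) (hα0 : ∀ i, 0 ≤ α i) (hα1 : ∀ i, α i ≤ 1)
    (hmass : 1 < (∑' k : ℕ, (k : ENNReal) * ENNReal.ofReal (Λ k)) +
        ∑' i : ℕ, ENNReal.ofReal (α i)) :
    ∃ R : ℕ, ∃ ε ∈ Set.Ioo (0 : ℝ) 1, ∃ δ > (0 : ℝ), ∃ ρ > (0 : ℝ), ∃ N₀ : ℕ,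
      ∀ N > N₀, ¬∃ ℓ : ℕ → ℕ,
        ((Set.Ici 1 ∩ Function.support fun k => k * ℓ k).Finite ∧
            (∑ᶠ k ∈ Set.Ici 1, k * ℓ k) = N) ∧
          dTrunc R (fun k => (ℓ k : ℝ) / N) Λ ≤ δ ∧
          DTrunc ε (sortedSeq N ℓ) α ≤ ρ := by
  classical
  obtain ⟨R, hR⟩ := aux_extract Λ hΛ α hα0 hmass
  -- replace the Λ-sum over range by a sum over Icc 1 R
  set A : ℝ := ∑ k ∈ Finset.Icc 1 R, (k : ℝ) * Λ k with hA
  have hAeq : (∑ k ∈ Finset.range (R + 1), (k : ℝ) * Λ k) = A := by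
    rw [hA]
    symm
    apply Finset.sum_subset
    · intro k hk
      simp only [Finset.mem_Icc] at hk
      simp only [Finset.mem_range]
      omega
    · intro k hk hk2
      simp only [Finset.mem_range] at hk
      simp only [Finset.mem_Icc] at hk2
      have : k = 0 := by omega
      simp [this]
  rw [hAeq] at hR
  -- choose minimal M
  have hPex : ∃ m : ℕ, 1 < A + ∑ i ∈ Finset.range m, α i := ⟨R + 1, hR⟩
  set M : ℕ := Nat.find hPex with hM
  have hPM : 1 < A + ∑ i ∈ Finset.range M, α i := Nat.find_spec hPex
  set B : ℝ := ∑ i ∈ Finset.range M, α i with hB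
  set c : ℝ := A + B - 1 with hc
  have hcpos : 0 < c := by rw [hc]; linarith
  -- εα
  set εα : ℝ := if M = 0 then 1 else α (M - 1) with hεαdef
  have hεα_le : ∀ i < M, εα ≤ α i := by
    intro i hi
    rw [hεαdef, if_neg (by omega)]
    exact hanti (by omega)
  have hεα_pos : 0 < εα := by
    rw [hεαdef]
    by_cases h0 : M = 0
    · simp [h0]
    · rw [if_neg h0]
      have hlt : M - 1 < M := by omega
      have hmin := Nat.find_min hPex hlt
      push_neg at hmin
      have hsucc : ∑ i ∈ Finset.range (M - 1 + 1), α i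
          = ∑ i ∈ Finset.range (M - 1), α i + α (M - 1) := Finset.sum_range_succ α (M - 1)
      have hM1 : M - 1 + 1 = M := by omega
      rw [hM1] at hsucc
      linarith [hPM, hB, hsucc, hmin]
  have hεα_le_one : εα ≤ 1 := by
    rw [hεαdef]
    by_cases h0 : M = 0
    · simp [h0]
    · rw [if_neg h0]; exact hα1 _
  -- constants
  set C : ℝ := ∑ k ∈ Finset.Icc 1 R, (k : ℝ) * 2 ^ k with hC
  have hCnn : 0 ≤ C :=
    Finset.sum_nonneg fun k _ => mul_nonneg (Nat.cast_nonneg k) (by positivity)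
  set E : ℝ := (M : ℝ) * 2 ^ M with hE
  have hEnn : 0 ≤ E := mul_nonneg (Nat.cast_nonneg M) (by positivity)
  set δ : ℝ := c / (2 * (C + 1)) with hδ
  have hδpos : 0 < δ := by
    rw [hδ]
    exact div_pos hcpos (by nlinarith [hCnn])
  set ρ : ℝ := min (c / (2 * (E + 1))) (εα / (2 * 2 ^ M)) with hρ
  have hρpos : 0 < ρ := by
    rw [hρ]
    exact lt_min (div_pos hcpos (by nlinarith [hEnn]))
      (div_pos hεα_pos (by positivity))
  set ε : ℝ := εα / 2 with hεdef
  refine ⟨R, ε, ⟨by rw [hεdef]; exact half_pos hεα_pos, by rw [hεdef]; linarith⟩, δ, hδpos, ρ, hρpos,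
    ⌈2 * (R : ℝ) / εα⌉₊, ?_⟩
  intro N hN
  rintro ⟨ℓ, ⟨hfin, hsum⟩, hd, hD⟩
  obtain ⟨hsumN, hzero⟩ := aux_sum_range ℓ N hfin hsum
  have hNpos : 0 < N := by
    rcases Nat.eq_zero_or_pos N with h | h
    · omega
    · exact h
  have hNR : 2 * (R : ℝ) / εα < N := by
    have h1 : (⌈2 * (R : ℝ) / εα⌉₊ : ℝ) < N := by exact_mod_cast hN
    exact lt_of_le_of_lt (Nat.le_ceil _) h1
  have hNr : (0:ℝ) < N := by exact_mod_cast hNpos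
  -- the list L
  set S : Multiset ℕ := (Finset.range (N + 1)).sum fun k => Multiset.replicate (ℓ k) k with hS
  set L : List ℕ := (S.sort (· ≤ ·)).reverse with hL
  have hLsum : L.sum = N := by
    rw [hL, List.sum_reverse, ← Multiset.sum_coe, Multiset.sort_eq, hS, aux_multiset_sum, hsumN]
  have hxdef : ∀ i, sortedSeq N ℓ i = ((L.getD i 0 : ℕ) : ℝ) / N := fun i => rfl
  have hgetD_le : ∀ i, L.getD i 0 ≤ N := fun i => hLsum ▸ aux_getD_le_sum L i
  have hx_nonneg : ∀ i, 0 ≤ sortedSeq N ℓ i := by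
    intro i; rw [hxdef i]; positivity
  have hx_le_one : ∀ i, sortedSeq N ℓ i ≤ 1 := by
    intro i
    rw [hxdef i, div_le_one hNr]
    exact_mod_cast hgetD_le i
  -- summability of the DTrunc series
  have hsummable : Summable (fun i : ℕ => (2 : ℝ) ^ (-((i : ℤ) + 1)) *
      (if ε ≤ max (sortedSeq N ℓ i) (α i) then |sortedSeq N ℓ i - α i| else 0)) := by
    apply Summable.of_nonneg_of_le
    · intro i
      apply mul_nonneg (by positivity)
      split <;> [exact abs_nonneg _; exact le_refl 0]
    · intro i
      show _ ≤ (1 / 2 : ℝ) ^ i * 1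
      have h1 : (2 : ℝ) ^ (-((i : ℤ) + 1)) ≤ (1 / 2) ^ i * (1 / 2) :=
        le_of_eq (aux_two_pow_neg i)
      have h2 : (if ε ≤ max (sortedSeq N ℓ i) (α i) then |sortedSeq N ℓ i - α i| else 0) ≤ 2 := by
        split
        · rw [abs_sub_le_iff]
          constructor
          · have := hx_le_one i; have := hα0 i; linarith
          · have := hx_nonneg i; have := hα1 i; linarith
        · norm_num
      have hnn : (0:ℝ) ≤ (if ε ≤ max (sortedSeq N ℓ i) (α i) then |sortedSeq N ℓ i - α i| else 0) := by
        split <;> [exact abs_nonneg _; exact le_refl 0]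
      calc (2 : ℝ) ^ (-((i : ℤ) + 1)) *
            (if ε ≤ max (sortedSeq N ℓ i) (α i) then |sortedSeq N ℓ i - α i| else 0)
          ≤ ((1/2)^i * (1/2)) * 2 := by
            apply mul_le_mul h1 h2 hnn (by positivity)
        _ ≤ (1 / 2 : ℝ) ^ i * 1 := le_of_eq (by ring)
    · exact (summable_geometric_of_lt_one (by norm_num) (by norm_num)).mul_right 1
  -- per-index macroscopic bounds for i < M
  have hmacro : ∀ i < M, α i - 2 ^ M * ρ ≤ sortedSeq N ℓ i := by
    intro i hi
    have hcond : ε ≤ max (sortedSeq N ℓ i) (α i) := by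
      have : ε < α i := by
        rw [hεdef]
        have := hεα_le i hi
        linarith
      exact le_trans this.le (le_max_right _ _)
    have hterm := Summable.le_tsum hsummable i (fun j _ => by
      apply mul_nonneg (by positivity)
      split <;> [exact abs_nonneg _; exact le_refl 0])
    rw [if_pos hcond] at hterm
    have hterm2 : (2 : ℝ) ^ (-((i : ℤ) + 1)) * |sortedSeq N ℓ i - α i| ≤ ρ :=
      le_trans hterm hD
    have hpow : (0:ℝ) < (2 : ℝ) ^ (-((i : ℤ) + 1)) := by positivity
    have habs : |sortedSeq N ℓ i - α i| ≤ 2 ^ (i + 1) * ρ := by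
      have h2 : (2:ℝ) ^ (i+1) * ((2 : ℝ) ^ (-((i : ℤ) + 1)) * |sortedSeq N ℓ i - α i|)
          ≤ 2 ^ (i+1) * ρ := by
        apply mul_le_mul_of_nonneg_left hterm2 (by positivity)
      have h3 : (2:ℝ) ^ (i+1) * (2 : ℝ) ^ (-((i : ℤ) + 1)) = 1 := aux_two_pow_cancel' i
      calc |sortedSeq N ℓ i - α i|
          = (2:ℝ) ^ (i+1) * (2 : ℝ) ^ (-((i : ℤ) + 1)) * |sortedSeq N ℓ i - α i| := by
            rw [h3, one_mul]
        _ ≤ 2 ^ (i+1) * ρ := by rw [mul_assoc]; exact h2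
    have hpowle : (2:ℝ) ^ (i + 1) ≤ 2 ^ M := by
      apply pow_le_pow_right₀ (by norm_num)
      omega
    have : |sortedSeq N ℓ i - α i| ≤ 2 ^ M * ρ :=
      le_trans habs (mul_le_mul_of_nonneg_right hpowle hρpos.le)
    have := abs_le.mp this
    linarith [this.1]
  have hmacro2 : ∀ i < M, εα / 2 ≤ sortedSeq N ℓ i := by
    intro i hi
    have h1 := hmacro i hi
    have h2 := hεα_le i hi
    have h3 : ρ ≤ εα / (2 * 2 ^ M) := min_le_right _ _
    have h4 : 2 ^ M * ρ ≤ εα / 2 := by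
      have hp : (0:ℝ) < 2 ^ M := by positivity
      calc (2:ℝ) ^ M * ρ ≤ 2 ^ M * (εα / (2 * 2 ^ M)) := by
            apply mul_le_mul_of_nonneg_left h3 hp.le
        _ = εα / 2 := by field_simp
    linarith
  -- top M entries are > R
  have htop : ∀ i < M, R < L.getD i 0 := by
    intro i hi
    have h1 := hmacro2 i hi
    rw [hxdef i] at h1
    have h2 : (R : ℝ) < (L.getD i 0 : ℝ) := by
      have : 2 * (R:ℝ) < εα * N := by
        rw [div_lt_iff₀ hεα_pos] at hNR
        linarith
      have h3 : εα / 2 * N ≤ (L.getD i 0 : ℝ) := by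
        rw [le_div_iff₀ hNr] at h1
        linarith
      nlinarith
    exact_mod_cast h2
  -- key combinatorial inequality
  have hkey := aux_key R M L htop
  rw [hLsum] at hkey
  -- compute the filter sum
  have hfiltersum : (L.filter (fun x => x ≤ R)).sum = ∑ k ∈ Finset.Icc 1 R, k * ℓ k := by
    have e1 : (L.filter (fun x => x ≤ R)).sum = (S.filter (· ≤ R)).sum := by
      calc (L.filter (fun x => x ≤ R)).sum
          = ((L : Multiset ℕ).filter (· ≤ R)).sum := by rw [Multiset.filter_coe]; rfl
        _ = (S.filter (· ≤ R)).sum := by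
            rw [hL, Multiset.coe_reverse, Multiset.sort_eq]
    rw [e1, aux_multiset_filter_sum]
    rw [← Finset.sum_filter]
    set G := (Finset.range (N + 1)).filter (fun k => k ≤ R) with hG
    have e2 : ∑ k ∈ G, k * ℓ k = ∑ k ∈ G ∩ Finset.Icc 1 R, k * ℓ k := by
      symm
      apply Finset.sum_subset (Finset.inter_subset_left)
      intro k hk hk2
      simp only [hG, Finset.mem_filter, Finset.mem_range] at hk
      simp only [Finset.mem_inter, Finset.mem_Icc, hG, Finset.mem_filter, Finset.mem_range] at hk2
      have : k = 0 := by omega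
      simp [this]
    have e3 : ∑ k ∈ Finset.Icc 1 R, k * ℓ k = ∑ k ∈ G ∩ Finset.Icc 1 R, k * ℓ k := by
      symm
      apply Finset.sum_subset (Finset.inter_subset_right)
      intro k hk hk2
      simp only [Finset.mem_Icc] at hk
      simp only [Finset.mem_inter, Finset.mem_Icc, hG, Finset.mem_filter, Finset.mem_range] at hk2
      have hkN : N < k := by omega
      rw [hzero k hkN, Nat.mul_zero]
    rw [e2, ← e3]
  rw [hfiltersum] at hkey
  -- microscopic bound
  have hmicro : ∀ k ∈ Finset.Icc 1 R, (N:ℝ) * ((k:ℝ) * Λ k - (k:ℝ) * 2 ^ k * δ)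
      ≤ ((k * ℓ k : ℕ) : ℝ) := by
    intro k hk
    have hterm := Finset.single_le_sum (f := fun k : ℕ =>
      (2 : ℝ) ^ (-(k : ℤ)) * |(ℓ k : ℝ) / N - Λ k|)
      (fun i _ => mul_nonneg (by positivity) (abs_nonneg _)) hk
    have hterm2 : (2 : ℝ) ^ (-(k : ℤ)) * |(ℓ k : ℝ) / N - Λ k| ≤ δ := le_trans hterm hd
    have habs : |(ℓ k : ℝ) / N - Λ k| ≤ 2 ^ k * δ := by
      have h3 : (2:ℝ) ^ k * (2 : ℝ) ^ (-(k : ℤ)) = 1 := aux_two_pow_cancel k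
      calc |(ℓ k : ℝ) / N - Λ k|
          = (2:ℝ) ^ k * (2 : ℝ) ^ (-(k : ℤ)) * |(ℓ k : ℝ) / N - Λ k| := by rw [h3, one_mul]
        _ ≤ 2 ^ k * δ := by
            rw [mul_assoc]
            exact mul_le_mul_of_nonneg_left hterm2 (by positivity)
    have h1 : Λ k - 2 ^ k * δ ≤ (ℓ k : ℝ) / N := by
      have := (abs_le.mp habs).1
      linarith
    have h2 : (N:ℝ) * (Λ k - 2 ^ k * δ) ≤ (ℓ k : ℝ) := by
      rw [le_div_iff₀ hNr] at h1
      linarith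
    have hk1 : (0:ℝ) ≤ (k:ℝ) := Nat.cast_nonneg k
    push_cast
    nlinarith
  -- sum the microscopic bound
  have hmicrosum : (N:ℝ) * (A - C * δ) ≤ ((∑ k ∈ Finset.Icc 1 R, k * ℓ k : ℕ) : ℝ) := by
    have hsum1 := Finset.sum_le_sum hmicro
    have heq1 : ∑ k ∈ Finset.Icc 1 R, ((N:ℝ) * ((k:ℝ) * Λ k - (k:ℝ) * 2 ^ k * δ))
        = (N:ℝ) * (A - C * δ) := by
      rw [← Finset.mul_sum, Finset.sum_sub_distrib, ← Finset.sum_mul, ← hA, ← hC]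
    calc (N:ℝ) * (A - C * δ)
        = ∑ k ∈ Finset.Icc 1 R, ((N:ℝ) * ((k:ℝ) * Λ k - (k:ℝ) * 2 ^ k * δ)) := heq1.symm
      _ ≤ ∑ k ∈ Finset.Icc 1 R, ((k * ℓ k : ℕ) : ℝ) := hsum1
      _ = ((∑ k ∈ Finset.Icc 1 R, k * ℓ k : ℕ) : ℝ) := (Nat.cast_sum _ _).symm
  -- sum the macroscopic bound
  have hmacrosum : (N:ℝ) * (B - E * ρ) ≤ ((∑ i ∈ Finset.range M, L.getD i 0 : ℕ) : ℝ) := by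
    have hterm : ∀ i ∈ Finset.range M, (N:ℝ) * (α i - 2 ^ M * ρ) ≤ ((L.getD i 0 : ℕ) : ℝ) := by
      intro i hi
      rw [Finset.mem_range] at hi
      have h1 := hmacro i hi
      rw [hxdef i] at h1
      rw [le_div_iff₀ hNr] at h1
      linarith
    have hsum2 := Finset.sum_le_sum hterm
    have heq2 : ∑ i ∈ Finset.range M, ((N:ℝ) * (α i - 2 ^ M * ρ)) = (N:ℝ) * (B - E * ρ) := by
      rw [← Finset.mul_sum, Finset.sum_sub_distrib, Finset.sum_const, Finset.card_range,
        nsmul_eq_mul, ← hB, hE]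
      ring
    calc (N:ℝ) * (B - E * ρ)
        = ∑ i ∈ Finset.range M, ((N:ℝ) * (α i - 2 ^ M * ρ)) := heq2.symm
      _ ≤ ∑ i ∈ Finset.range M, ((L.getD i 0 : ℕ) : ℝ) := hsum2
      _ = ((∑ i ∈ Finset.range M, L.getD i 0 : ℕ) : ℝ) := (Nat.cast_sum _ _).symm
  -- final contradiction
  have hcast : ((∑ k ∈ Finset.Icc 1 R, k * ℓ k : ℕ) : ℝ)
      + ((∑ i ∈ Finset.range M, L.getD i 0 : ℕ) : ℝ) ≤ (N:ℝ) := by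
    exact_mod_cast hkey
  have hCδ : C * δ < c / 2 := by
    rw [hδ, ← mul_div_assoc,
      div_lt_div_iff₀ (by nlinarith [hCnn] : (0:ℝ) < 2 * (C + 1)) (by norm_num : (0:ℝ) < 2)]
    nlinarith
  have hEρ : E * ρ ≤ c / 2 := by
    have h1 : ρ ≤ c / (2 * (E + 1)) := min_le_left _ _
    calc E * ρ ≤ E * (c / (2 * (E + 1))) := mul_le_mul_of_nonneg_left h1 hEnn
      _ ≤ c / 2 := by
        rw [← mul_div_assoc,
          div_le_div_iff₀ (by nlinarith [hEnn] : (0:ℝ) < 2 * (E + 1)) (by norm_num : (0:ℝ) < 2)]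
        nlinarith
  have hfinal : (N:ℝ) * (A + B - C * δ - E * ρ) ≤ (N:ℝ) := by
    calc (N:ℝ) * (A + B - C * δ - E * ρ) = (N:ℝ) * (A - C * δ) + (N:ℝ) * (B - E * ρ) := by ring
      _ ≤ _ := by linarith [hmicrosum, hmacrosum, hcast]
  have h1lt : 1 < A + B - C * δ - E * ρ := by
    linarith [hCδ, hEρ, hcpos, hc]
  nlinarith
end

section
/- For every t ∈ (0,∞), the function f_t : (0,∞) → ℝ defined by f_t(x) = log( x/(1 − e^{−tx}) ) + (t/2)(1 − x) is strictly decreasing on (0,∞). -/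
lemma key_ineq : ∀ u : ℝ, 0 < u → (2 - u) * Real.exp u < 2 + u := by
  have hg' : ∀ u : ℝ, HasDerivAt (fun u : ℝ => 2 + u - (2 - u) * Real.exp u)
      (1 - (1 - u) * Real.exp u) u := by
    intro u
    have h1 : HasDerivAt (fun u : ℝ => 2 + u) 1 u :=
      (hasDerivAt_id u).const_add 2
    have h2 : HasDerivAt (fun u : ℝ => (2 - u) * Real.exp u)
        ((-1) * Real.exp u + (2 - u) * Real.exp u) u :=
      ((hasDerivAt_id u).const_sub 2).mul (Real.hasDerivAt_exp u)
    have := h1.fun_sub h2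
    refine this.congr_deriv ?_
    ring
  have hmono : StrictMonoOn (fun u : ℝ => 2 + u - (2 - u) * Real.exp u) (Set.Ici 0) := by
    apply strictMonoOn_of_deriv_pos (convex_Ici 0)
    · exact fun x _ => ((hg' x).differentiableAt.continuousAt).continuousWithinAt
    · intro x hx
      rw [interior_Ici] at hx
      rw [(hg' x).deriv]
      have hx0 : x ≠ 0 := ne_of_gt hx
      have h := Real.add_one_lt_exp (neg_ne_zero.mpr hx0)
      have hpos : (0:ℝ) < Real.exp x := Real.exp_pos x
      have hmul : Real.exp (-x) * Real.exp x = 1 := by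
        rw [← Real.exp_add]; simp
      nlinarith [h, hpos, hmul]
  intro u hu
  have h0 := hmono (Set.self_mem_Ici) (Set.mem_Ici.mpr hu.le) hu
  simp at h0
  linarith

/-- For every `t > 0`, the function `f_t(x) = log(x/(1-e^{-tx})) + (t/2)(1-x)` is strictly
decreasing on `(0,∞)`. -/
theorem strictAntiOn_ft (t : ℝ) (ht : 0 < t) :
    StrictAntiOn (fun x : ℝ => Real.log (x / (1 - Real.exp (-(t * x)))) + t / 2 * (1 - x))
      (Set.Ioi 0) := by
  set f := fun x : ℝ => Real.log (x / (1 - Real.exp (-(t * x)))) + t / 2 * (1 - x) with hf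
  have hD : ∀ x : ℝ, 0 < x → 0 < 1 - Real.exp (-(t * x)) := by
    intro x hx
    have : Real.exp (-(t * x)) < 1 := Real.exp_lt_one_iff.mpr (by nlinarith)
    linarith
  have hderiv : ∀ x : ℝ, 0 < x → HasDerivAt f
      ((1 * (1 - Real.exp (-(t * x))) - x * (t * Real.exp (-(t * x)))) /
        (1 - Real.exp (-(t * x)))^2 / (x / (1 - Real.exp (-(t * x)))) + t / 2 * (-1)) x := by
    intro x hx
    have hDx := hD x hx
    have hE : HasDerivAt (fun x : ℝ => Real.exp (-(t * x))) (Real.exp (-(t * x)) * (-t)) x := by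
      have hinner : HasDerivAt (fun x : ℝ => -(t * x)) (-t) x := by
        have := ((hasDerivAt_id x).const_mul t).fun_neg
        simpa using this
      exact (Real.hasDerivAt_exp _).comp x hinner
    have hDen : HasDerivAt (fun x : ℝ => 1 - Real.exp (-(t * x))) (t * Real.exp (-(t * x))) x := by
      have := hE.const_sub 1
      refine this.congr_deriv ?_
      ring
    have hq : HasDerivAt (fun x : ℝ => x / (1 - Real.exp (-(t * x))))
        ((1 * (1 - Real.exp (-(t * x))) - x * (t * Real.exp (-(t * x)))) /
          (1 - Real.exp (-(t * x)))^2) x :=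
      (hasDerivAt_id x).div hDen (ne_of_gt hDx)
    have hqpos : 0 < x / (1 - Real.exp (-(t * x))) := div_pos hx hDx
    have hlog := hq.log (ne_of_gt hqpos)
    have hlin : HasDerivAt (fun x : ℝ => t / 2 * (1 - x)) (t / 2 * (-1)) x := by
      have := ((hasDerivAt_id x).const_sub 1).const_mul (t / 2)
      simpa using this
    exact hlog.add hlin
  apply StrictAntiOn.mono _ (le_refl (Set.Ioi 0))
  apply strictAntiOn_of_deriv_neg (convex_Ioi 0)
  · exact fun x hx => ((hderiv x hx).differentiableAt.continuousAt).continuousWithinAt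
  · intro x hx
    rw [interior_Ioi] at hx
    rw [(hderiv x hx).deriv]
    have hDx := hD x hx
    set E := Real.exp (-(t * x)) with hEdef
    have hEpos : 0 < E := Real.exp_pos _
    have hkey := key_ineq (t * x) (mul_pos ht hx)
    have hmul : E * Real.exp (t * x) = 1 := by
      rw [hEdef, ← Real.exp_add]; simp
    -- 2 - t*x < (2 + t*x) * E
    have hkey2 : 2 - t * x < (2 + t * x) * E := by
      have hexp : 0 < Real.exp (t * x) := Real.exp_pos _
      nlinarith [hkey, hmul, hEpos]
    have h1 : (1 - E) ≠ 0 := ne_of_gt hDx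
    have hx0 : (0:ℝ) < x := hx
    have h2 : x ≠ 0 := ne_of_gt hx0
    have hxD : 0 < x * (1 - E) := mul_pos hx0 hDx
    have hsimp : (1 * (1 - E) - x * (t * E)) / (1 - E)^2 / (x / (1 - E))
        = (1 - E - t * x * E) / (x * (1 - E)) := by
      field_simp
    rw [hsimp]
    rw [div_add' _ _ _ (ne_of_gt hxD)]
    apply div_neg_of_neg_of_pos _ hxD
    nlinarith [hkey2, hEpos, hDx, hx0, ht]
end
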